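/- arXiv:1111.2713 — 3 statements merged into one kernel-verified Lean document; each statement's English description precedes it below -/
import Mathlib

section
/- Let q be a prime power and let n, k, δ be integers with 0 ≤ δ ≤ k ≤ n. Then A_q(n, 2δ+2, k) ≥ C_q(n, k, k−δ) + [n choose k−δ]_q − [k choose k−δ]_q · C_q(n, k, k−δ). -/
open Module

/-- The Gaussian binomial coefficient `[n choose k]_q`, as a real number:
`∏_{i=0}^{k-1} (q^{n-i}-1)/(q^{k-i}-1)`. -/
noncomputable def gaussBinom (q n k : ℕ) : ℝ :=
  ∏ i ∈ Finset.range k, ((q : ℝ) ^ (n - i) - 1) / ((q : ℝ) ^ (k - i) - 1)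

/-- `C` is a constant dimension code in the Grassmannian `G_q(n,k)` with
minimum subspace distance at least `d`: all its elements are `k`-dimensional
subspaces of `F^n`, and `d_S(U,V) = 2k - 2 dim(U ⊓ V) ≥ d` for distinct `U,V ∈ C`. -/
def IsGrassmannCode (F : Type) [Field F] (n k d : ℕ)
    (C : Finset (Submodule F (Fin n → F))) : Prop :=
  (∀ U ∈ C, finrank F ↥U = k) ∧
  ∀ U ∈ C, ∀ V ∈ C, U ≠ V → d ≤ 2 * k - 2 * finrank F ↥(U ⊓ V)

/-- `A_q(n,d,k)`: the maximum size of an `(n,M,d,k)_q` code. -/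
noncomputable def maxCodeSize (F : Type) [Field F] (n d k : ℕ) : ℕ :=
  sSup {M | ∃ C : Finset (Submodule F (Fin n → F)), IsGrassmannCode F n k d C ∧ C.card = M}

/-- `C` is a `q`-covering design `C_q(n,k,r)`: a set of `k`-dimensional subspaces of
`F^n` such that every `r`-dimensional subspace is contained in at least one of them. -/
def IsCoveringDesign (F : Type) [Field F] (n k r : ℕ)
    (C : Finset (Submodule F (Fin n → F))) : Prop :=
  (∀ U ∈ C, finrank F ↥U = k) ∧
  ∀ W : Submodule F (Fin n → F), finrank F ↥W = r → ∃ U ∈ C, W ≤ U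

/-- `𝒞_q(n,k,r)`: the minimum size of a `q`-covering design `C_q(n,k,r)`. -/
noncomputable def minCoverSize (F : Type) [Field F] (n k r : ℕ) : ℕ :=
  sInf {M | ∃ C : Finset (Submodule F (Fin n → F)), IsCoveringDesign F n k r C ∧ C.card = M}

/-!
Let `r = k - δ`. Take a minimum covering design `D` and a maximal subfamily `C ⊆ D` whose
members pairwise meet in dimension `< r`; then `C` is a code of minimum distance `2δ + 2`, and by
maximality every `U ∈ D \ C` shares an `r`-subspace with some member of `C`. The `r`-subspaces
covered by `C` number at most `|C|·[k choose r]_q`, and each `U ∈ D \ C` contains at most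
`[k choose r]_q - 1` of the others. Since `D` covers all `[n choose r]_q` of them,
`[n choose r]_q + |D \ C| ≤ |D|·[k choose r]_q`, and `|C| = |D| - |D \ C|`.
-/

open Finset

theorem Finset.exists_subset_pairwise_maximal {α : Type*} [DecidableEq α] (D : Finset α)
    (r : α → α → Prop) [Std.Symm r] :
    ∃ C ⊆ D, (C : Set α).Pairwise r ∧ ∀ U ∈ D \ C, ∃ V ∈ C, ¬ r U V := by
  classical
  obtain ⟨C, hC, hmax⟩ := (D.powerset.filter fun C : Finset α => (C : Set α).Pairwise r)
    |>.exists_max_image card ⟨∅, by simp⟩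
  rw [mem_filter, mem_powerset] at hC
  refine ⟨C, hC.1, hC.2, fun U hU => ?_⟩
  rw [mem_sdiff] at hU
  by_contra! h
  have := hmax (insert U C) (by
    rw [mem_filter, mem_powerset, coe_insert, Set.pairwise_insert_of_symm]
    exact ⟨insert_subset hU.1 hC.1, hC.2, fun V hV _ => h V hV⟩)
  rw [card_insert_of_notMem hU.2] at this
  omega

theorem Finset.card_add_card_sdiff_le_sum_card {α β : Type*} [DecidableEq α] [DecidableEq β]
    {D C : Finset α} {P : Finset β} {s : α → Finset β} (hCD : C ⊆ D)
    (hcover : P ⊆ D.biUnion s) (hmeet : ∀ U ∈ D \ C, ∃ V ∈ C, (s U ∩ s V).Nonempty) :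
    #P + #(D \ C) ≤ ∑ U ∈ D, #(s U) := by
  set S := C.biUnion s
  have hP : P ⊆ S ∪ (D \ C).biUnion fun U => s U \ S := by
    intro W hW
    obtain ⟨U, hU, hWU⟩ := mem_biUnion.1 (hcover hW)
    by_cases hUC : U ∈ C
    · exact mem_union_left _ (mem_biUnion.2 ⟨U, hUC, hWU⟩)
    by_cases hWS : W ∈ S
    · exact mem_union_left _ hWS
    · exact mem_union_right _
        (mem_biUnion.2 ⟨U, mem_sdiff.2 ⟨hU, hUC⟩, mem_sdiff.2 ⟨hWU, hWS⟩⟩)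
  have hsdiff : ∀ U ∈ D \ C, #(s U \ S) + 1 ≤ #(s U) := by
    intro U hU
    obtain ⟨V, hV, W, hW⟩ := hmeet U hU
    have : (s U ∩ S).Nonempty :=
      ⟨W, mem_inter.2 ⟨(mem_inter.1 hW).1, mem_biUnion.2 ⟨V, hV, (mem_inter.1 hW).2⟩⟩⟩
    rw [← card_sdiff_add_card_inter (s U) S]
    exact Nat.add_le_add_left this.card_pos _
  calc #P + #(D \ C)
      ≤ #S + #((D \ C).biUnion fun U => s U \ S) + #(D \ C) := by
        gcongr; exact (card_le_card hP).trans (card_union_le _ _)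
    _ ≤ ∑ U ∈ C, #(s U) + ∑ U ∈ D \ C, (#(s U \ S) + 1) := by
        rw [sum_add_distrib, sum_const, smul_eq_mul, mul_one, ← add_assoc]
        gcongr <;> exact card_biUnion_le
    _ ≤ ∑ U ∈ C, #(s U) + ∑ U ∈ D \ C, #(s U) := by gcongr with U hU; exact hsdiff U hU
    _ = ∑ U ∈ D, #(s U) := by rw [add_comm, sum_sdiff hCD]

theorem gaussBinom_mul_prod {q : ℕ} (hq : 1 < q) {d r : ℕ} (hr : r ≤ d) :
    gaussBinom q d r * ∏ i ∈ range r, ((q : ℝ) ^ r - (q : ℝ) ^ i) =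
      ∏ i ∈ range r, ((q : ℝ) ^ d - (q : ℝ) ^ i) := by
  rw [gaussBinom, ← prod_mul_distrib]
  refine prod_congr rfl fun i hi => ?_
  have hir : i < r := mem_range.1 hi
  have hq1 : (1 : ℝ) < q := by exact_mod_cast hq
  have hsplit {m : ℕ} (him : i ≤ m) :
      (q : ℝ) ^ m - (q : ℝ) ^ i = (q : ℝ) ^ i * ((q : ℝ) ^ (m - i) - 1) := by
    rw [mul_sub, mul_one, ← pow_add, Nat.add_sub_cancel' him]
  have hne : (q : ℝ) ^ (r - i) - 1 ≠ 0 := (sub_pos.2 (one_lt_pow₀ hq1 (by omega))).ne'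
  rw [hsplit hir.le, hsplit (by omega)]
  field_simp

namespace Submodule

section DivisionRing

variable {F V : Type*} [DivisionRing F] [AddCommGroup V] [Module F V]

theorem exists_le_le_finrank_eq [FiniteDimensional F V] {W X : Submodule F V} (hWX : W ≤ X)
    {r : ℕ} (hWr : finrank F W ≤ r) (hrX : r ≤ finrank F X) :
    ∃ U : Submodule F V, W ≤ U ∧ U ≤ X ∧ finrank F U = r := by
  induction r, hWr using Nat.le_induction with
  | base => exact ⟨W, le_rfl, hWX, rfl⟩
  | succ r _ ih =>
    obtain ⟨U, hWU, hUX, rfl⟩ := ih (by omega)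
    obtain ⟨x, hxX, hxU⟩ := SetLike.exists_of_lt (lt_of_le_of_ne hUX (by rintro rfl; omega))
    exact ⟨U ⊔ span F {x}, hWU.trans le_sup_left,
      sup_le hUX ((span_singleton_le_iff_mem x X).2 hxX), finrank_sup_span_singleton hxU⟩

theorem card_le_and_finrank_eq (U : Submodule F V) (r : ℕ) :
    Nat.card {W : Submodule F V // W ≤ U ∧ finrank F W = r} =
      Nat.card {W : Submodule F U // finrank F W = r} :=
  Nat.card_congr <| ((MapSubtype.orderIso U).toEquiv.subtypeEquiv fun W => by
      rw [← finrank_map_subtype_eq U W]; rfl).trans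
    (Equiv.subtypeSubtypeEquivSubtypeInter (· ≤ U) fun W => finrank F W = r) |>.symm

variable [Fintype F] [Finite V]

theorem card_linearIndependent_span_eq {r : ℕ} (W : Submodule F V) (hW : finrank F W = r) :
    Nat.card {s : Fin r → V // LinearIndependent F s ∧ span F (Set.range s) = W} =
      ∏ i : Fin r, (Fintype.card F ^ r - Fintype.card F ^ i.val) := by
  have hmem {s : Fin r → V} (h : span F (Set.range s) = W) (i : Fin r) : s i ∈ W :=
    h ▸ subset_span (Set.mem_range_self i)
  subst hW
  rw [← card_linearIndependent le_rfl]
  refine Nat.card_congr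
    { toFun s := ⟨fun i => ⟨s.1 i, hmem s.2.2 i⟩, s.2.1.of_comp W.subtype⟩
      invFun t := ⟨W.subtype ∘ t.1, t.2.map' W.subtype W.ker_subtype, ?_⟩
      left_inv _ := rfl
      right_inv _ := rfl }
  refine eq_of_le_of_finrank_eq (span_le.2 (Set.range_subset_iff.2 fun i => (t.1 i).2)) ?_
  rw [finrank_span_eq_card (t.2.map' W.subtype W.ker_subtype), Fintype.card_fin]

/-- Each `r`-subspace is spanned by `∏ (q^r - q^i)` independent `r`-tuples of `V`, and there are
`∏ (q^(dim V) - q^i)` of those in all. -/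
theorem card_finrank_eq_mul {r : ℕ} (hr : r ≤ finrank F V) :
    Nat.card {W : Submodule F V // finrank F W = r} *
        ∏ i : Fin r, (Fintype.card F ^ r - Fintype.card F ^ i.val) =
      ∏ i : Fin r, (Fintype.card F ^ finrank F V - Fintype.card F ^ i.val) := by
  classical
  have := Fintype.ofFinite {W : Submodule F V // finrank F W = r}
  let Φ : {s : Fin r → V // LinearIndependent F s} → {W : Submodule F V // finrank F W = r} :=
    fun s => ⟨span F (Set.range s.1), by rw [finrank_span_eq_card s.2, Fintype.card_fin]⟩
  have hfiber (W : {W : Submodule F V // finrank F W = r}) :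
      Nat.card {s // Φ s = W} = ∏ i : Fin r, (Fintype.card F ^ r - Fintype.card F ^ i.val) := by
    rw [← card_linearIndependent_span_eq W.1 W.2]
    exact Nat.card_congr ((Equiv.subtypeEquivRight fun _ => Subtype.ext_iff).trans
      (Equiv.subtypeSubtypeEquivSubtypeInter _ fun s => span F (Set.range s) = W.1))
  rw [← card_linearIndependent hr, ← Nat.card_congr (Equiv.sigmaFiberEquiv Φ), Nat.card_sigma,
    sum_congr rfl fun W _ => hfiber W, sum_const, card_univ,
    ← Nat.card_eq_fintype_card (α := {W : Submodule F V // finrank F W = r}), smul_eq_mul]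

theorem card_finrank_eq {r : ℕ} (hr : r ≤ finrank F V) :
    (Nat.card {W : Submodule F V // finrank F W = r} : ℝ) =
      gaussBinom (Fintype.card F) (finrank F V) r := by
  set q := Fintype.card F
  have hq : 1 < q := Fintype.one_lt_card
  have hcast {m : ℕ} (hrm : r ≤ m) : ((∏ i : Fin r, (q ^ m - q ^ i.val) : ℕ) : ℝ) =
      ∏ i ∈ range r, ((q : ℝ) ^ m - (q : ℝ) ^ i) := by
    rw [Fin.prod_univ_eq_prod_range (fun i => q ^ m - q ^ i), Nat.cast_prod]
    refine prod_congr rfl fun i hi => ?_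
    rw [Nat.cast_sub (Nat.pow_le_pow_right hq.le (by simp at hi; omega))]
    push_cast; rfl
  have hpos : (0 : ℝ) < ∏ i ∈ range r, ((q : ℝ) ^ r - (q : ℝ) ^ i) :=
    prod_pos fun i hi => sub_pos.2 (pow_lt_pow_right₀ (by exact_mod_cast hq) (mem_range.1 hi))
  refine mul_right_cancel₀ hpos.ne' ?_
  rw [gaussBinom_mul_prod hq hr, ← hcast le_rfl, ← hcast hr, ← Nat.cast_mul,
    card_finrank_eq_mul hr]

end DivisionRing

end Submodule

section Grassmannian

variable (F : Type) [Field F] {n : ℕ}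

theorem isGrassmannCode_of_pairwise_finrank_inf_lt {k δ : ℕ}
    {C : Finset (Submodule F (Fin n → F))} (hk : ∀ U ∈ C, finrank F U = k)
    (hC : (C : Set (Submodule F (Fin n → F))).Pairwise
      fun U V => finrank F ↥(U ⊓ V) < k - δ) :
    IsGrassmannCode F n k (2 * δ + 2) C :=
  ⟨hk, fun U hU V hV hUV => by have := hC hU hV hUV; omega⟩

section Finite

variable [Finite F]

theorem card_le_maxCodeSize {d k : ℕ} {C : Finset (Submodule F (Fin n → F))}
    (hC : IsGrassmannCode F n k d C) : #C ≤ maxCodeSize F n d k := by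
  have := Fintype.ofFinite (Submodule F (Fin n → F))
  refine le_csSup ⟨Fintype.card (Submodule F (Fin n → F)), ?_⟩ ⟨C, hC, rfl⟩
  rintro M ⟨C', -, rfl⟩
  exact card_le_univ C'

theorem exists_isCoveringDesign {k r : ℕ} (hrk : r ≤ k) (hkn : k ≤ n) :
    ∃ D, IsCoveringDesign F n k r D := by
  classical
  have := Fintype.ofFinite (Submodule F (Fin n → F))
  refine ⟨univ.filter fun U => finrank F U = k, fun U hU => (mem_filter.1 hU).2, fun W hW => ?_⟩
  obtain ⟨U, hWU, -, hU⟩ := Submodule.exists_le_le_finrank_eq (le_top : W ≤ ⊤) (hW ▸ hrk)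
    (by rwa [finrank_top, Module.finrank_fin_fun])
  exact ⟨U, mem_filter.2 ⟨mem_univ U, hU⟩, hWU⟩

theorem exists_isCoveringDesign_card_eq_minCoverSize {k r : ℕ} (hrk : r ≤ k) (hkn : k ≤ n) :
    ∃ D, IsCoveringDesign F n k r D ∧ #D = minCoverSize F n k r := by
  obtain ⟨D, hD⟩ := exists_isCoveringDesign F hrk hkn
  exact Nat.sInf_mem (s := {M | ∃ D, IsCoveringDesign F n k r D ∧ #D = M}) ⟨_, D, hD, rfl⟩

end Finite

variable [Fintype F] [Fintype (Submodule F (Fin n → F))]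

theorem card_filter_finrank_eq {r : ℕ} (hrn : r ≤ n) :
    (#{W : Submodule F (Fin n → F) | finrank F W = r} : ℝ) =
      gaussBinom (Fintype.card F) n r := by
  have h := Submodule.card_finrank_eq (F := F) (V := Fin n → F) (r := r) (by simpa)
  rwa [Module.finrank_fin_fun, Nat.card_eq_fintype_card, Fintype.card_subtype] at h

open Classical in
theorem card_filter_le_finrank_eq {k r : ℕ} {U : Submodule F (Fin n → F)}
    (hU : finrank F U = k) (hrk : r ≤ k) :
    (#{W : Submodule F (Fin n → F) | W ≤ U ∧ finrank F W = r} : ℝ) =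
      gaussBinom (Fintype.card F) k r := by
  have h := Submodule.card_finrank_eq (F := F) (V := U) (r := r) (hU ▸ hrk)
  rwa [hU, ← Submodule.card_le_and_finrank_eq, Nat.card_eq_fintype_card,
    Fintype.card_subtype] at h

open Classical in
theorem card_filter_finrank_eq_add_card_sdiff_le {k r : ℕ} (hrk : r ≤ k)
    {D C : Finset (Submodule F (Fin n → F))} (hD : IsCoveringDesign F n k r D) (hCD : C ⊆ D)
    (hblock : ∀ U ∈ D \ C, ∃ V ∈ C, r ≤ finrank F ↥(U ⊓ V)) :
    (#{W : Submodule F (Fin n → F) | finrank F W = r} : ℝ) + #(D \ C) ≤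
      #D * gaussBinom (Fintype.card F) k r := by
  rw [← nsmul_eq_mul, ← sum_const,
    ← sum_congr rfl fun U hU => card_filter_le_finrank_eq F (hD.1 U hU) hrk]
  refine mod_cast card_add_card_sdiff_le_sum_card hCD (fun W hW => ?_) fun U hU => ?_
  · obtain ⟨U, hU, hWU⟩ := hD.2 W (mem_filter.1 hW).2
    exact mem_biUnion.2 ⟨U, hU, mem_filter.2 ⟨mem_univ W, hWU, (mem_filter.1 hW).2⟩⟩
  · obtain ⟨V, hV, hUV⟩ := hblock U hU
    obtain ⟨W, -, hW, hWr⟩ := Submodule.exists_le_le_finrank_eq bot_le (by simp) hUV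
    exact ⟨V, hV, W, by simp [hW.trans inf_le_left, hW.trans inf_le_right, hWr]⟩

end Grassmannian

theorem code_ge_cover_general (F : Type) [Field F] [Fintype F] (n k δ : ℕ)
    (hkn : k ≤ n) :
    (maxCodeSize F n (2 * δ + 2) k : ℝ) ≥
      (minCoverSize F n k (k - δ) : ℝ) +
        gaussBinom (Fintype.card F) n (k - δ) -
        gaussBinom (Fintype.card F) k (k - δ) * (minCoverSize F n k (k - δ) : ℝ) := by
  classical
  have := Fintype.ofFinite (Submodule F (Fin n → F))
  have hrk : k - δ ≤ k := Nat.sub_le k δ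
  obtain ⟨D, hD, hDcard⟩ := exists_isCoveringDesign_card_eq_minCoverSize F hrk hkn
  have : Std.Symm fun U V : Submodule F (Fin n → F) => finrank F ↥(U ⊓ V) < k - δ :=
    ⟨fun U V h => inf_comm U V ▸ h⟩
  obtain ⟨C, hCD, hC, hCmax⟩ :=
    D.exists_subset_pairwise_maximal fun U V => finrank F ↥(U ⊓ V) < k - δ
  have hcount := card_filter_finrank_eq_add_card_sdiff_le F hrk hD hCD
    fun U hU => (hCmax U hU).imp fun _ => And.imp_right not_lt.1
  have hcode := isGrassmannCode_of_pairwise_finrank_inf_lt F (fun U hU => hD.1 U (hCD hU)) hC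
  have hA : (#C : ℝ) ≤ maxCodeSize F n (2 * δ + 2) k := mod_cast card_le_maxCodeSize F hcode
  have hsplit : (#(D \ C) : ℝ) + #C = #D := mod_cast card_sdiff_add_card_eq_card hCD
  rw [← hDcard, ← card_filter_finrank_eq F (hrk.trans hkn)]
  linarith

/-- `A_q(n,2δ+2,k) ≥ 𝒞_q(n,k,k-δ) + [n choose k-δ]_q - [k choose k-δ]_q ⬝ 𝒞_q(n,k,k-δ)`. -/
theorem code_ge_cover (F : Type) [Field F] [Fintype F] (n k δ : ℕ)
    (hδk : δ ≤ k) (hkn : k ≤ n) :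
    (maxCodeSize F n (2 * δ + 2) k : ℝ) ≥
      (minCoverSize F n k (k - δ) : ℝ) +
        gaussBinom (Fintype.card F) n (k - δ) -
        gaussBinom (Fintype.card F) k (k - δ) * (minCoverSize F n k (k - δ) : ℝ) :=
  code_ge_cover_general F n k δ hkn
end

section
/- (Iterated Schönheim bound) Let q be a prime power and let n, k, r be integers with 0 ≤ r ≤ k ≤ n. Then C_q(n, k, r) ≥ ⌈((q^n−1)/(q^k−1)) · ⌈((q^{n−1}−1)/(q^{k−1}−1)) · ⌈ ⋯ ⌈(q^{n−r+1}−1)/(q^{k−r+1}−1)⌉ ⋯ ⌉⌉⌉, where the nested ceilings are taken over the r factors (q^{n−i}−1)/(q^{k−i}−1) for i = 0, 1, …, r−1, innermost first. -/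
open Module

/-- The iterated Schönheim bound expression: `S 0 = 1` and
`S j = ⌈((q^(n-r+j)-1)/(q^(k-r+j)-1)) ⬝ S (j-1)⌉` for `1 ≤ j ≤ r` (innermost first). -/
noncomputable def schonheimIter (q n k r : ℕ) : ℕ → ℕ
  | 0 => 1
  | j + 1 =>
    ⌈(((q : ℝ) ^ (n - r + (j + 1)) - 1) / ((q : ℝ) ^ (k - r + (j + 1)) - 1)) *
      (schonheimIter q n k r j : ℝ)⌉₊

set_option synthInstance.maxHeartbeats 1000000
set_option maxHeartbeats 1000000
set_option linter.unusedSectionVars false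

lemma exists_superspace {F V : Type} [Field F] [AddCommGroup V] [Module F V]
    [FiniteDimensional F V] (W : Submodule F V) (k : ℕ) (h1 : finrank F W ≤ k)
    (h2 : k ≤ finrank F V) : ∃ U : Submodule F V, W ≤ U ∧ finrank F ↥U = k := by
  induction' hd : k - finrank F W with d ih generalizing W
  · have : finrank F W = k := by omega
    exact ⟨W, le_rfl, this⟩
  · have hlt : finrank F W < k := by omega
    have hW : W ≠ ⊤ := by
      rintro rfl
      rw [finrank_top] at hlt; omega
    obtain ⟨x, hx⟩ : ∃ x, x ∉ W := by
      by_contra h; push_neg at h; exact hW (eq_top_iff.2 fun y _ => h y)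
    have hx0 : x ≠ 0 := fun h => hx (h ▸ W.zero_mem)
    have hinf : W ⊓ (F ∙ x) = ⊥ := by
      rw [eq_bot_iff]
      rintro y ⟨hyW, hy⟩
      obtain ⟨c, rfl⟩ := Submodule.mem_span_singleton.1 hy
      rcases eq_or_ne c 0 with rfl | hc
      · simp
      · exact absurd (by simpa [smul_smul, inv_mul_cancel₀ hc] using W.smul_mem c⁻¹ hyW) hx
    have hfin : finrank F ↥(W ⊔ (F ∙ x)) = finrank F W + 1 := by
      have h := Submodule.finrank_sup_add_finrank_inf_eq W (F ∙ x)
      rw [hinf, finrank_bot, finrank_span_singleton hx0] at h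
      omega
    obtain ⟨U, hWU, hU⟩ := ih (W ⊔ (F ∙ x)) (by omega) (by omega)
    exact ⟨U, le_trans le_sup_left hWU, hU⟩


section Aux
open Submodule
variable {F : Type} [Field F] [Fintype F]

lemma finrank_map_mkQ {n : ℕ} (P U : Submodule F (Fin n → F)) (hPU : P ≤ U) :
    finrank F ↥(U.map P.mkQ) + finrank F ↥P = finrank F ↥U := by
  have hrange : LinearMap.range (P.mkQ.comp U.subtype) = U.map P.mkQ := by
    rw [LinearMap.range_comp, Submodule.range_subtype]
  have hker : LinearMap.ker (P.mkQ.comp U.subtype) = comap U.subtype P := by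
    rw [LinearMap.ker_comp, Submodule.ker_mkQ]
  have h := LinearMap.finrank_range_add_finrank_ker (P.mkQ.comp U.subtype)
  rw [hrange, hker] at h
  have hk : finrank F ↥(comap U.subtype P) = finrank F ↥P :=
    (Submodule.comapSubtypeEquivOfLe hPU).finrank_eq
  omega

open scoped Classical in
lemma degree_bound {n k r : ℕ} (C : Finset (Submodule F (Fin n → F)))
    (hC : IsCoveringDesign F n k (r+1) C)
    (v : Fin n → F) (hv : v ≠ 0) :
    ∃ D : Finset (Submodule F (Fin (n-1) → F)), IsCoveringDesign F (n-1) (k-1) r D ∧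
      D.card ≤ (C.filter (fun U => v ∈ U)).card := by
  set P : Submodule F (Fin n → F) := F ∙ v with hPdef
  have hP1 : finrank F ↥P = 1 := finrank_span_singleton hv
  have hQrank : finrank F ((Fin n → F) ⧸ P) = n - 1 := by
    have h := Submodule.finrank_quotient_add_finrank P
    rw [hP1, Module.finrank_fin_fun] at h
    omega
  obtain ⟨e⟩ : Nonempty (((Fin n → F) ⧸ P) ≃ₗ[F] (Fin (n-1) → F)) := by
    apply FiniteDimensional.nonempty_linearEquiv_of_finrank_eq
    rw [hQrank, Module.finrank_fin_fun]
  set Φ : Submodule F (Fin n → F) → Submodule F (Fin (n-1) → F) :=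
    fun U => (U.map P.mkQ).map (e : ((Fin n → F) ⧸ P) →ₗ[F] (Fin (n-1) → F)) with hΦ
  have hΦrank : ∀ U : Submodule F (Fin n → F), P ≤ U →
      finrank F ↥(Φ U) + 1 = finrank F ↥U := by
    intro U hPU
    have h := finrank_map_mkQ P U hPU
    rw [hP1] at h
    rw [hΦ]
    simp only
    rw [LinearEquiv.finrank_map_eq]
    exact h
  refine ⟨(C.filter (fun U => v ∈ U)).image Φ, ⟨?_, ?_⟩, Finset.card_image_le⟩
  · intro X hX
    obtain ⟨U, hU, rfl⟩ := Finset.mem_image.1 hX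
    rw [Finset.mem_filter] at hU
    have hPU : P ≤ U := (span_singleton_le_iff_mem v U).2 hU.2
    have h := hΦrank U hPU
    rw [hC.1 U hU.1] at h
    omega
  · intro W' hW'
    set W0 : Submodule F ((Fin n → F) ⧸ P) :=
      W'.map (e.symm : (Fin (n-1) → F) →ₗ[F] ((Fin n → F) ⧸ P)) with hW0
    set W : Submodule F (Fin n → F) := W0.comap P.mkQ with hW
    have hPW : P ≤ W := by
      intro x hx
      have hx0 : P.mkQ x = 0 := by
        rw [Submodule.mkQ_apply, Submodule.Quotient.mk_eq_zero]; exact hx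
      show P.mkQ x ∈ W0
      rw [hx0]; exact W0.zero_mem
    have hmapW : W.map P.mkQ = W0 :=
      Submodule.map_comap_eq_of_surjective (Submodule.mkQ_surjective P) W0
    have hΦW : Φ W = W' := by
      rw [hΦ]; simp only
      rw [hmapW, hW0, ← Submodule.map_comp]
      simp
    have hWrank : finrank F ↥W = r + 1 := by
      have h2 := hΦrank W hPW
      rw [hΦW, hW'] at h2
      omega
    obtain ⟨U, hU, hWU⟩ := hC.2 W hWrank
    have hvU : v ∈ U := hWU (hPW (Submodule.mem_span_singleton_self v))
    refine ⟨Φ U, Finset.mem_image_of_mem Φ (Finset.mem_filter.2 ⟨hU, hvU⟩), ?_⟩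
    rw [← hΦW]
    exact Submodule.map_mono (Submodule.map_mono hWU)

lemma schonheim_shift (q n k r : ℕ) :
    ∀ j, schonheimIter q n k (r+1) j = schonheimIter q (n-1) (k-1) r j
  | 0 => rfl
  | j+1 => by
    have e1 : n - (r+1) = (n-1) - r := by omega
    have e2 : k - (r+1) = (k-1) - r := by omega
    simp only [schonheimIter, schonheim_shift q n k r j, e1, e2]

open scoped Classical in
lemma card_ge (F : Type) [Field F] [Fintype F] : ∀ (r k n : ℕ), r ≤ k → k ≤ n →
    ∀ C : Finset (Submodule F (Fin n → F)), IsCoveringDesign F n k r C →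
    schonheimIter (Fintype.card F) n k r r ≤ C.card := by
  intro r
  induction r with
  | zero =>
    intro k n _ _ C hC
    obtain ⟨U, hU, -⟩ := hC.2 ⊥ (finrank_bot F _)
    simpa [schonheimIter] using Finset.card_pos.2 ⟨U, hU⟩
  | succ r ih =>
    intro k n hrk hkn C hC
    set q := Fintype.card F with hqdef
    have hq : 1 < q := Fintype.one_lt_card
    set S := schonheimIter q n k (r+1) r with hS
    set s : Finset (Fin n → F) := Finset.univ.filter (fun v => v ≠ 0) with hs
    -- sizes
    have hscard : s.card = q ^ n - 1 := by
      rw [hs, Finset.filter_ne', Finset.card_erase_of_mem (Finset.mem_univ 0),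
        Finset.card_univ, Fintype.card_fun, Fintype.card_fin]
    -- per-U count
    have hUcount : ∀ U ∈ C, (s.filter (fun v => v ∈ U)).card = q ^ k - 1 := by
      intro U hU
      have h1 : s.filter (fun v => v ∈ U) = (Finset.univ.filter (fun v => v ∈ U)).erase 0 := by
        ext v
        simp [hs, Finset.mem_erase, Finset.filter_filter, and_comm]
      have h2 : (Finset.univ.filter (fun v : Fin n → F => v ∈ U)).card = q ^ k := by
        rw [← Fintype.card_subtype]
        have : Fintype.card {v : Fin n → F // v ∈ U} = Fintype.card ↥U := rfl
        rw [this, card_eq_pow_finrank (K := F), hC.1 U hU]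
      rw [h1, Finset.card_erase_of_mem (by simp [U.zero_mem]), h2]
    -- per-v bound
    have hvbound : ∀ v ∈ s, S ≤ (C.filter (fun U => v ∈ U)).card := by
      intro v hv
      have hv0 : v ≠ 0 := (Finset.mem_filter.1 hv).2
      obtain ⟨D, hD, hDcard⟩ := degree_bound C hC v hv0
      have := ih (k-1) (n-1) (by omega) (by omega) D hD
      rw [hS, schonheim_shift q n k r r]
      exact le_trans this hDcard
    -- double counting
    have hsum : ∑ U ∈ C, (s.filter (fun v => v ∈ U)).card
        = ∑ v ∈ s, (C.filter (fun U => v ∈ U)).card := by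
      simp only [Finset.card_filter]
      exact Finset.sum_comm
    have hnat : (q ^ n - 1) * S ≤ C.card * (q ^ k - 1) := by
      calc (q ^ n - 1) * S = ∑ _v ∈ s, S := by rw [Finset.sum_const, hscard, smul_eq_mul]
        _ ≤ ∑ v ∈ s, (C.filter (fun U => v ∈ U)).card := Finset.sum_le_sum hvbound
        _ = ∑ U ∈ C, (s.filter (fun v => v ∈ U)).card := hsum.symm
        _ = ∑ _U ∈ C, (q ^ k - 1) := Finset.sum_congr rfl hUcount
        _ = C.card * (q ^ k - 1) := by rw [Finset.sum_const, smul_eq_mul]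
    -- conclude
    have e1 : n - (r+1) + (r+1) = n := by omega
    have e2 : k - (r+1) + (r+1) = k := by omega
    have hgoal : schonheimIter q n k (r+1) (r+1)
        = ⌈(((q:ℝ) ^ n - 1) / ((q:ℝ) ^ k - 1)) * (S : ℝ)⌉₊ := by
      simp only [schonheimIter, ← hS, e1, e2]
    rw [hgoal, Nat.ceil_le]
    have h1k : (1:ℕ) ≤ q ^ k := Nat.one_le_pow _ _ (by omega)
    have h1n : (1:ℕ) ≤ q ^ n := Nat.one_le_pow _ _ (by omega)
    have hkpos : (0:ℝ) < (q:ℝ) ^ k - 1 := by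
      have : (1:ℝ) < (q:ℝ) ^ k := by
        apply one_lt_pow₀ (by exact_mod_cast hq) (by omega)
      linarith
    rw [div_mul_eq_mul_div, div_le_iff₀ hkpos]
    have hcn : ((q ^ n - 1 : ℕ) : ℝ) = (q:ℝ) ^ n - 1 := by
      rw [Nat.cast_sub h1n, Nat.cast_pow, Nat.cast_one]
    have hck : ((q ^ k - 1 : ℕ) : ℝ) = (q:ℝ) ^ k - 1 := by
      rw [Nat.cast_sub h1k, Nat.cast_pow, Nat.cast_one]
    calc ((q:ℝ) ^ n - 1) * (S:ℝ) = (((q ^ n - 1) * S : ℕ) : ℝ) := by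
          rw [Nat.cast_mul, hcn]
      _ ≤ ((C.card * (q ^ k - 1) : ℕ) : ℝ) := by exact_mod_cast hnat
      _ = (C.card : ℝ) * ((q:ℝ) ^ k - 1) := by rw [Nat.cast_mul, hck]

end Aux

/-- **Iterated Schönheim bound.** `𝒞_q(n,k,r) ≥ S(r)` where the nested ceilings run over
the `r` factors `(q^(n-i)-1)/(q^(k-i)-1)`, `i = 0,…,r-1`, innermost first. -/
theorem iterated_schonheim_bound (F : Type) [Field F] [Fintype F] (n k r : ℕ)
    (hrk : r ≤ k) (hkn : k ≤ n) :
    minCoverSize F n k r ≥ schonheimIter (Fintype.card F) n k r r := by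
  have hne : {M | ∃ C : Finset (Submodule F (Fin n → F)),
      IsCoveringDesign F n k r C ∧ C.card = M}.Nonempty := by
    classical
    have hfin : Finite (Submodule F (Fin n → F)) :=
      Finite.of_injective _ SetLike.coe_injective
    let C := (Set.toFinite {U : Submodule F (Fin n → F) | finrank F ↥U = k}).toFinset
    have hmem : ∀ U : Submodule F (Fin n → F), U ∈ C ↔ finrank F ↥U = k :=
      fun U => Set.Finite.mem_toFinset _
    refine ⟨C.card, C, ⟨?_, ?_⟩, rfl⟩
    · intro U hU
      exact (hmem U).1 hU
    · intro W hW
      obtain ⟨U, hWU, hU⟩ := exists_superspace W k (by rw [hW]; exact hrk)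
        (by rw [Module.finrank_fin_fun]; exact hkn)
      exact ⟨U, (hmem U).2 hU, hWU⟩
  refine le_csInf hne ?_
  rintro M ⟨C, hC, rfl⟩
  exact card_ge F r k n hrk hkn C hC
end

section
/- Let q be a prime power and let t and r be fixed positive integers. Then there exists N such that for all integers n ≥ N, C_q(n, n−t, r) = (q^{(r+1)t} − 1)/(q^t − 1). -/
/-!
Lower bound: given fewer than `σ_r = 1 + q^t + ⋯ + q^(rt)` subspaces of codimension `t`, an
`r`-space lying in none of them is built one vector at a time. Averaging over the vectors outside
the current space `S`, some vector lies in fewer than a `q^(-t)` fraction of the given subspaces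
through `S`; since `σ_r = 1 + q^t σ_(r-1)`, fewer than `σ_(r-1)` of them remain to be avoided.

Upper bound: for `n ≥ (r+1)t` and `K = 𝔽_(q^t)`, pull the `σ_r` hyperplanes of `K^(r+1)` back along
an `𝔽_q`-linear surjection `𝔽_q^n → K^(r+1)`. Each pullback has codimension `t`, and the image of
an `r`-space spans a proper `K`-subspace, which lies in some hyperplane.
-/

open Module

open Finset
open scoped LinearAlgebra.Projectivization

section Greedy

variable {F V : Type*} [Field F] [Fintype F] [AddCommGroup V] [Module F V] [Fintype V]

open scoped Classical in
theorem card_filter_notMem_and_mem {S U : Submodule F V} (hSU : S ≤ U) :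
    #{v | v ∉ S ∧ v ∈ U} = Fintype.card F ^ finrank F U - Fintype.card F ^ finrank F S := by
  have hcard (P : Submodule F V) : #({v | v ∈ P} : Finset V) = Fintype.card F ^ finrank F P := by
    rw [← Fintype.card_subtype, card_eq_pow_finrank (K := F) (V := P)]
  rw [← hcard U, ← hcard S, ← card_sdiff_of_subset fun v hv => by
    simp only [mem_filter, mem_univ, true_and] at hv ⊢; exact hSU hv]
  congr 1
  ext v
  simp [and_comm]

open scoped Classical in
theorem exists_notMem_mul_card_filter_mem_lt {t : ℕ} (ht : 0 < t) {S : Submodule F V}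
    {I : Finset (Submodule F V)} (hI : I.Nonempty) (hSI : ∀ U ∈ I, S ≤ U)
    (hIdim : ∀ U ∈ I, finrank F U + t ≤ finrank F V) :
    ∃ v ∉ S, Fintype.card F ^ t * #{U ∈ I | v ∈ U} < #I := by
  have hq : 1 < Fintype.card F := Fintype.one_lt_card
  obtain ⟨U₀, hU₀⟩ := hI
  have hst : finrank F S + t ≤ finrank F V :=
    (Nat.add_le_add_right (Submodule.finrank_mono (hSI U₀ hU₀)) t).trans (hIdim U₀ hU₀)
  set B : Finset V := {v | v ∉ S}
  have hB : #B = Fintype.card F ^ finrank F V - Fintype.card F ^ finrank F S := by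
    rw [← finrank_top F V, ← card_filter_notMem_and_mem le_top]
    simp [B]
  have hBpos : 0 < #B := by
    rw [hB, Nat.sub_pos_iff_lt]
    exact Nat.pow_lt_pow_right hq (by omega)
  -- `U \ S` is less than a `q ^ (-t)` fraction of `V \ S`, where `q = |F|`.
  have hUB : ∀ U ∈ I, Fintype.card F ^ t * #{v ∈ B | v ∈ U} < #B := by
    intro U hU
    have hdim := hIdim U hU
    have h₁ : Fintype.card F ^ t * Fintype.card F ^ finrank F U ≤ Fintype.card F ^ finrank F V := by
      rw [← pow_add]; exact Nat.pow_le_pow_right (by omega) (by omega)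
    have h₂ : Fintype.card F ^ finrank F S < Fintype.card F ^ t * Fintype.card F ^ finrank F S :=
      lt_mul_left (by positivity) (Nat.one_lt_pow ht.ne' hq)
    rw [filter_filter, card_filter_notMem_and_mem (hSI U hU), hB, Nat.mul_sub]
    omega
  obtain ⟨v, hvB, hvmin⟩ := exists_min_image B (fun v => #{U ∈ I | v ∈ U}) (card_pos.mp hBpos)
  refine ⟨v, (mem_filter.mp hvB).2, Nat.lt_of_mul_lt_mul_left (a := #B) ?_⟩
  calc #B * (Fintype.card F ^ t * #{U ∈ I | v ∈ U})
      = Fintype.card F ^ t * (#B • #{U ∈ I | v ∈ U}) := by rw [smul_eq_mul]; ring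
    _ ≤ Fintype.card F ^ t * ∑ w ∈ B, #{U ∈ I | w ∈ U} :=
        Nat.mul_le_mul_left _ (card_nsmul_le_sum _ _ _ hvmin)
    _ = ∑ U ∈ I, Fintype.card F ^ t * #{w ∈ B | w ∈ U} := by
        rw [← mul_sum]; exact congrArg _ (sum_card_bipartiteAbove_eq_sum_card_bipartiteBelow _)
    _ < ∑ U ∈ I, #B := sum_lt_sum_of_nonempty ⟨U₀, hU₀⟩ hUB
    _ = #B * #I := by rw [sum_const, smul_eq_mul, mul_comm]

open scoped Classical in
theorem exists_finrank_eq_forall_not_le {t : ℕ} (ht : 0 < t) (r : ℕ) {S : Submodule F V}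
    {I : Finset (Submodule F V)} (hSI : ∀ U ∈ I, S ≤ U)
    (hIdim : ∀ U ∈ I, finrank F U + t ≤ finrank F V)
    (hIcard : #I < ∑ i ∈ range (r + 1), (Fintype.card F ^ t) ^ i)
    (hSr : finrank F S + r ≤ finrank F V) :
    ∃ W : Submodule F V, S ≤ W ∧ finrank F W = finrank F S + r ∧ ∀ U ∈ I, ¬W ≤ U := by
  induction r generalizing S I with
  | zero =>
    obtain rfl : I = ∅ := by simpa using hIcard
    exact ⟨S, le_rfl, rfl, by simp⟩
  | succ r ih =>
    rw [geom_sum_succ] at hIcard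
    set σ := ∑ i ∈ range (r + 1), (Fintype.card F ^ t) ^ i
    have hσ : 0 < σ := sum_pos (fun i _ => by positivity) nonempty_range_add_one
    obtain ⟨v, hvS, hv⟩ : ∃ v ∉ S, #{U ∈ I | v ∈ U} < σ := by
      rcases I.eq_empty_or_nonempty with rfl | hI
      · obtain ⟨v, -, hvS⟩ := SetLike.exists_of_lt
          (Submodule.lt_top_of_finrank_lt_finrank (by omega : finrank F S < finrank F V))
        exact ⟨v, hvS, by simpa using hσ⟩
      · obtain ⟨v, hvS, hv⟩ := exists_notMem_mul_card_filter_mem_lt ht hI hSI hIdim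
        exact ⟨v, hvS, Nat.lt_of_mul_lt_mul_left (hv.trans_le (by omega))⟩
    -- Adjoin `v` to `S`; only the members of `I` through `v` remain to be avoided.
    obtain ⟨W, hSW, hWdim, hWI⟩ := ih (S := S ⊔ F ∙ v) (I := {U ∈ I | v ∈ U})
      (fun U hU => sup_le (hSI U (mem_filter.mp hU).1)
        ((Submodule.span_singleton_le_iff_mem v U).mpr (mem_filter.mp hU).2))
      (fun U hU => hIdim U (mem_filter.mp hU).1) hv
      (by rw [Submodule.finrank_sup_span_singleton hvS]; omega)
    have hvW : v ∈ W := hSW (Submodule.mem_sup_right (Submodule.mem_span_singleton_self v))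
    refine ⟨W, le_sup_left.trans hSW, ?_, ?_⟩
    · rw [hWdim, Submodule.finrank_sup_span_singleton hvS]; ring
    · intro U hU hWU
      exact hWI U (mem_filter.mpr ⟨hU, hWU hvW⟩) hWU

end Greedy

theorem sum_le_card_of_isCoveringDesign {F : Type} [Field F] [Fintype F] {n k r t : ℕ}
    (ht : 0 < t) (hkt : k + t ≤ n) (hrn : r ≤ n) {C : Finset (Submodule F (Fin n → F))}
    (hC : IsCoveringDesign F n k r C) :
    ∑ i ∈ range (r + 1), (Fintype.card F ^ t) ^ i ≤ #C := by
  by_contra! hcard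
  obtain ⟨W, -, hW, hWC⟩ := exists_finrank_eq_forall_not_le ht r (S := ⊥) (I := C)
    (fun _ _ => bot_le) (fun U hU => by rw [hC.1 U hU, finrank_fin_fun]; exact hkt) hcard
    (by simpa using hrn)
  obtain ⟨U, hU, hWU⟩ := hC.2 W (by simpa using hW)
  exact hWC U hU hWU

section Hyperplanes

variable {F K V E : Type*} [Field F] [Field K] [Algebra F K] [AddCommGroup V] [Module K V]
  [Module F V] [IsScalarTower F K V] [AddCommGroup E] [Module F E]

theorem finrank_span_le_finrank_of_tower (W : Submodule F V) [FiniteDimensional F W] :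
    finrank K (Submodule.span K (W : Set V)) ≤ finrank F W := by
  let b := Module.finBasis F W
  have hW : Submodule.span K (W : Set V) = Submodule.span K (Set.range (W.subtype ∘ b)) := by
    rw [← Submodule.span_span_of_tower F K (Set.range _), Set.range_comp, ← Submodule.map_span,
      b.span_eq, Submodule.map_subtype_top]
  rw [hW]
  exact (finrank_range_le_card _).trans (by simp)

theorem exists_finset_hyperplane_pullbacks [Finite K] [FiniteDimensional F E]
    [FiniteDimensional K V] (π : E →ₗ[F] V) (hπ : Function.Surjective π) :
    ∃ C : Finset (Submodule F E),
      (∀ U ∈ C, finrank F U + finrank F K = finrank F E) ∧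
      (∀ W : Submodule F E, finrank F W < finrank K V → ∃ U ∈ C, W ≤ U) ∧
      #C ≤ ∑ i ∈ range (finrank K V), Nat.card K ^ i := by
  classical
  have : Finite (Dual K V) := Module.finite_of_finite K
  have : Fintype (ℙ K (Dual K V)) := Fintype.ofFinite _
  let pullback (φ : Dual K V) : Submodule F E := LinearMap.ker (φ.restrictScalars F ∘ₗ π)
  refine ⟨univ.image fun P : ℙ K (Dual K V) => pullback P.rep, ?_, ?_, ?_⟩
  · simp only [mem_image, mem_univ, true_and, forall_exists_index, forall_apply_eq_imp_iff]
    intro P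
    have hsurj : Function.Surjective (P.rep.restrictScalars F ∘ₗ π) :=
      (LinearMap.surjective_of_ne_zero P.rep_nonzero).comp hπ
    rw [add_comm, ← LinearMap.finrank_range_add_finrank_ker (P.rep.restrictScalars F ∘ₗ π),
      LinearMap.range_eq_top.mpr hsurj, finrank_top]
  · intro W hW
    set S := Submodule.span K ((W.map π : Submodule F V) : Set V)
    have hS : finrank K S < finrank K V :=
      (finrank_span_le_finrank_of_tower _).trans_lt ((Submodule.finrank_map_le π W).trans_lt hW)
    obtain ⟨φ, hφ, hSφ⟩ := S.exists_le_ker_of_lt_top (Submodule.lt_top_of_finrank_lt_finrank hS)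
    obtain ⟨a, ha⟩ := Projectivization.exists_smul_eq_mk_rep K φ hφ
    refine ⟨pullback (Projectivization.mk K φ hφ).rep, mem_image_of_mem _ (mem_univ _), ?_⟩
    intro x hx
    have hφx : φ (π x) = 0 := hSφ (Submodule.subset_span (Submodule.mem_map_of_mem hx))
    simp [pullback, ← ha, hφx]
  · refine card_image_le.trans_eq ?_
    rw [card_univ, Fintype.card_eq_nat_card,
      Projectivization.card_of_finrank K _ Subspace.dual_finrank_eq]

end Hyperplanes

theorem LinearMap.exists_surjective_of_finrank_le {F E V : Type*} [Field F] [AddCommGroup E]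
    [Module F E] [AddCommGroup V] [Module F V] [FiniteDimensional F E] [FiniteDimensional F V]
    (h : finrank F V ≤ finrank F E) : ∃ π : E →ₗ[F] V, Function.Surjective π := by
  obtain ⟨ι, hι⟩ := (finrank_le_iff_exists_linearMap (R := F)).mp h
  obtain ⟨π, hπ⟩ := ι.exists_leftInverse_of_injective (LinearMap.ker_eq_bot.mpr hι)
  exact ⟨π, fun v => ⟨ι v, LinearMap.congr_fun hπ v⟩⟩

theorem exists_isCoveringDesign_card_le {F : Type} [Field F] [Fintype F] {n t r : ℕ}
    (ht : 0 < t) (hn : (r + 1) * t ≤ n) :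
    ∃ C, IsCoveringDesign F n (n - t) r C ∧
      #C ≤ ∑ i ∈ range (r + 1), (Fintype.card F ^ t) ^ i := by
  obtain ⟨p, _⟩ := CharP.exists F
  obtain ⟨-, hp, -⟩ := FiniteField.card F p
  have : Fact p.Prime := ⟨hp⟩
  have : NeZero t := ⟨ht.ne'⟩
  let K := FiniteField.Extension F p t
  have hK : finrank F K = t := FiniteField.finrank_extension F p t
  have hV : finrank F (Fin (r + 1) → K) = (r + 1) * t := by
    rw [← finrank_mul_finrank F K, hK, finrank_fin_fun, mul_comm]
  obtain ⟨π, hπ⟩ := LinearMap.exists_surjective_of_finrank_le (F := F) (E := Fin n → F)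
    (V := Fin (r + 1) → K) (by rw [hV, finrank_fin_fun]; exact hn)
  obtain ⟨C, hCdim, hCcov, hCcard⟩ := exists_finset_hyperplane_pullbacks (K := K) π hπ
  refine ⟨C, ⟨fun U hU => ?_, fun W hW => hCcov W ?_⟩, ?_⟩
  · have := hCdim U hU
    rw [hK, finrank_fin_fun] at this
    omega
  · rw [hW, finrank_fin_fun]; omega
  · rwa [finrank_fin_fun, FiniteField.natCard_extension, Nat.card_eq_fintype_card] at hCcard

theorem minCoverSize_eq {F : Type} [Field F] {n k r m : ℕ}
    (hle : ∃ C, IsCoveringDesign F n k r C ∧ #C ≤ m)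
    (hge : ∀ C, IsCoveringDesign F n k r C → m ≤ #C) : minCoverSize F n k r = m := by
  obtain ⟨C, hC, hCm⟩ := hle
  have hmem : #C ∈ {M | ∃ C, IsCoveringDesign F n k r C ∧ #C = M} := ⟨C, hC, rfl⟩
  refine le_antisymm ((Nat.sInf_le hmem).trans hCm) (le_csInf ⟨_, hmem⟩ ?_)
  rintro _ ⟨C', hC', rfl⟩
  exact hge C' hC'

theorem covering_large_k_general (F : Type) [Field F] [Fintype F] (t r : ℕ)
    (ht : 0 < t) :
    ∃ N : ℕ, ∀ n : ℕ, N ≤ n →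
      (minCoverSize F n (n - t) r : ℝ) =
        ((Fintype.card F : ℝ) ^ ((r + 1) * t) - 1) / ((Fintype.card F : ℝ) ^ t - 1) := by
  refine ⟨(r + 1) * t, fun n hn => ?_⟩
  have htn : t ≤ n := (Nat.le_mul_of_pos_left t r.succ_pos).trans hn
  have hmin : minCoverSize F n (n - t) r = ∑ i ∈ range (r + 1), (Fintype.card F ^ t) ^ i :=
    minCoverSize_eq (exists_isCoveringDesign_card_le ht hn)
      fun C hC => sum_le_card_of_isCoveringDesign ht (by omega) (by nlinarith) hC
  have hqt : (Fintype.card F : ℝ) ^ t ≠ 1 :=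
    (one_lt_pow₀ (by exact_mod_cast Fintype.one_lt_card) ht.ne').ne'
  rw [hmin, Nat.cast_sum, mul_comm, pow_mul]
  push_cast
  exact geom_sum_eq hqt _

/-- **Theorem (covering for large `k`).** For fixed positive `t`, `r`, and all
sufficiently large `n`, `𝒞_q(n, n-t, r) = (q^((r+1)t)-1)/(q^t-1)`. -/
theorem covering_large_k (F : Type) [Field F] [Fintype F] (t r : ℕ)
    (ht : 0 < t) (hr : 0 < r) :
    ∃ N : ℕ, ∀ n : ℕ, N ≤ n →
      (minCoverSize F n (n - t) r : ℝ) =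
        ((Fintype.card F : ℝ) ^ ((r + 1) * t) - 1) / ((Fintype.card F : ℝ) ^ t - 1) :=
  covering_large_k_general F t r ht
end
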